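/- arXiv:2602.11484 — 2 statements merged into one kernel-verified Lean document; each statement's English description precedes it below -/
import Mathlib

section
/- Let $T$ be a finite tree with adjacency matrix $A$, and let $P$ be a nonzero real vector indexed by the vertices of $T$ satisfying $AP = 0$. Then the support of $P$ (the set of vertices $v$ with $P(v) \neq 0$) is an independent set in $T$, i.e., no edge of $T$ joins two vertices that both lie in the support of $P$. -/
/-- For a finite tree `G` with adjacency matrix `A`, any nonzero vector
`P` with `A *ᵥ P = 0` has support which is an independent set: no edge joins two
vertices where `P` is nonzero. -/
theorem null_vector_support_independent
    {V : Type*} [Fintype V] [DecidableEq V]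
    (G : SimpleGraph V) [DecidableRel G.Adj] (hT : G.IsTree)
    (P : V → ℝ) (hP : P ≠ 0)
    (hker : (G.adjMatrix ℝ).mulVec P = 0) :
    ∀ u v : V, G.Adj u v → ¬(P u ≠ 0 ∧ P v ≠ 0) := by
  intro u v huv
  rintro ⟨hu, hv⟩
  -- We construct arbitrarily long paths ending at `v` on which `P` is nonzero.
  have key : ∀ n : ℕ, ∃ (w : V) (q : G.Walk w v), q.IsPath ∧ q.length = n + 1 ∧
      ∀ x ∈ q.support, P x ≠ 0 := by
    intro n
    induction n with
    | zero =>
      refine ⟨u, SimpleGraph.Walk.cons huv SimpleGraph.Walk.nil, ?_, by simp, ?_⟩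
      · simp [SimpleGraph.Walk.cons_isPath_iff, huv.ne]
      · intro x hx
        simp only [SimpleGraph.Walk.support_cons, SimpleGraph.Walk.support_nil,
          List.mem_cons, List.mem_singleton, List.not_mem_nil, or_false] at hx
        rcases hx with rfl | rfl <;> assumption
    | succ n ih =>
      obtain ⟨w, q, hq, hlen, hsupp⟩ := ih
      have hnotnil : ¬ q.Nil := by
        rw [SimpleGraph.Walk.not_nil_iff_lt_length]; omega
      set y₁ := q.getVert 1 with hy₁def
      have hadj1 : G.Adj w y₁ := q.adj_snd hnotnil
      have hy₁mem : y₁ ∈ q.support := by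
        rw [SimpleGraph.Walk.mem_support_iff_exists_getVert]
        exact ⟨1, rfl, by omega⟩
      -- any neighbor of `w` lying on `q` must be `y₁`
      have huniq : ∀ y, G.Adj w y → y ∈ q.support → y = y₁ := by
        intro y hwy hy
        have hts := q.take_spec hy
        have heq : q.takeUntil y hy = SimpleGraph.Walk.cons hwy SimpleGraph.Walk.nil :=
          (hT.existsUnique_path w y).unique (hq.takeUntil hy)
            (by simp [SimpleGraph.Walk.cons_isPath_iff, hwy.ne])
        rw [heq, SimpleGraph.Walk.cons_nil_append] at hts
        have h2 := congrArg (fun r : G.Walk w v => r.getVert 1) hts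
        simpa [SimpleGraph.Walk.getVert_cons_succ] using h2
      -- the row of `A *ᵥ P = 0` at `w`
      have hrow : ∑ y ∈ G.neighborFinset w, P y = 0 := by
        have := congrFun hker w
        rwa [SimpleGraph.adjMatrix_mulVec_apply] at this
      -- split neighbors on membership in `q.support`
      have hsplit : ∑ y ∈ G.neighborFinset w, P y =
          (∑ y ∈ (G.neighborFinset w).filter (· ∈ q.support), P y) +
          ∑ y ∈ (G.neighborFinset w).filter (¬ · ∈ q.support), P y :=
        (Finset.sum_filter_add_sum_filter_not _ _ _).symm
      have hfilt : (G.neighborFinset w).filter (· ∈ q.support) = {y₁} := by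
        ext y
        simp only [Finset.mem_filter, SimpleGraph.mem_neighborFinset, Finset.mem_singleton]
        constructor
        · rintro ⟨h1, h2⟩; exact huniq y h1 h2
        · rintro rfl; exact ⟨hadj1, hy₁mem⟩
      rw [hrow, hfilt, Finset.sum_singleton] at hsplit
      have hrest : ∑ y ∈ (G.neighborFinset w).filter (¬ · ∈ q.support), P y ≠ 0 := by
        intro h0
        rw [h0, add_zero] at hsplit
        exact hsupp y₁ hy₁mem hsplit.symm
      obtain ⟨y, hy, hPy⟩ := Finset.exists_ne_zero_of_sum_ne_zero hrest
      simp only [Finset.mem_filter, SimpleGraph.mem_neighborFinset] at hy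
      obtain ⟨hwy, hynotin⟩ := hy
      refine ⟨y, SimpleGraph.Walk.cons hwy.symm q, ?_, ?_, ?_⟩
      · rw [SimpleGraph.Walk.cons_isPath_iff]
        exact ⟨hq, by simpa using hynotin⟩
      · simp [hlen]
      · intro x hx
        rw [SimpleGraph.Walk.support_cons, List.mem_cons] at hx
        rcases hx with rfl | hx
        · exact hPy
        · exact hsupp x hx
  obtain ⟨w, q, hq, hlen, -⟩ := key (Fintype.card V)
  have := hq.length_lt
  omega
end

section
/- Let $\Gamma$ be a finite tree with $n \geq 2$ vertices, $m = n-1$ edges, unsigned incidence matrix $M \in \mathbb{R}^{n \times m}$, and adjacency matrix $A$. Let $d = \dim \ker(A)$ and let $G \in \mathbb{R}^{n \times d}$ be a matrix whose columns form a basis of $\ker(A)$. Then $\operatorname{rank}(M^\top G) = d$. -/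
/-- Let `G` be a finite tree with at least two vertices, `M` its unsigned
incidence matrix and `A` its adjacency matrix.  If the columns of `B` form a basis of
`ker A` (where `d = dim ker A`), then `rank (Mᵀ * B) = d`. -/
theorem rank_incidence_transpose_mul_kernel_basis
    {V : Type*} [Fintype V] [DecidableEq V]
    (G : SimpleGraph V) [DecidableRel G.Adj] (hT : G.IsTree)
    (hV : 2 ≤ Fintype.card V)
    (M : Matrix V G.edgeSet ℝ)
    (hM : ∀ (v : V) (e : G.edgeSet), M v e = if v ∈ (e : Sym2 V) then 1 else 0)
    (d : ℕ)
    (hd : d = Module.finrank ℝ (LinearMap.ker (G.adjMatrix ℝ).mulVecLin))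
    (B : Matrix V (Fin d) ℝ)
    (hBind : LinearIndependent ℝ (fun j : Fin d => fun v : V => B v j))
    (hBspan : Submodule.span ℝ (Set.range (fun j : Fin d => fun v : V => B v j)) =
      LinearMap.ker (G.adjMatrix ℝ).mulVecLin) :
    (M.transpose * B).rank = d := by
  classical
  set K : Submodule ℝ (V → ℝ) := LinearMap.ker (G.adjMatrix ℝ).mulVecLin with hK
  set f : (V → ℝ) →ₗ[ℝ] (G.edgeSet → ℝ) := (M.transpose).mulVecLin with hf
  -- key injectivity on K
  have key : ∀ x : V → ℝ, x ∈ K → f x = 0 → x = 0 := by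
    intro x hx hfx
    have hAx : (G.adjMatrix ℝ).mulVec x = 0 := hx
    have hsum : ∀ u w : V, G.Adj u w → x u + x w = 0 := by
      intro u w huw
      have he : s(u, w) ∈ G.edgeSet := huw
      have h0 := congrFun hfx ⟨s(u, w), he⟩
      simp only [hf, Matrix.mulVecLin_apply, Matrix.mulVec, Matrix.transpose_apply,
        dotProduct, hM, Pi.zero_apply, ite_mul, one_mul, zero_mul] at h0
      have hcond : (fun u' : V => if u' ∈ (s(u, w) : Sym2 V) then x u' else 0)
          = fun u' => if u' ∈ ({u, w} : Finset V) then x u' else 0 := by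
        funext u'
        simp [Sym2.mem_iff]
      rw [hcond, Finset.sum_ite_mem, Finset.univ_inter, Finset.sum_pair huw.ne] at h0
      exact h0
    funext v
    obtain ⟨w, hw⟩ := Fintype.exists_ne_of_one_lt_card (by omega) v
    have hreach := (hT.isConnected.preconnected v w).some
    have hadj : ∃ w', G.Adj v w' := by
      cases hreach with
      | nil => exact absurd rfl hw
      | cons h q => exact ⟨_, h⟩
    obtain ⟨w', hvw'⟩ := hadj
    have hdeg : 0 < G.degree v := (G.degree_pos_iff_exists_adj v).2 ⟨w', hvw'⟩
    have hAv := congrFun hAx v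
    rw [SimpleGraph.adjMatrix_mulVec_apply, Pi.zero_apply] at hAv
    have hxw : ∀ u ∈ G.neighborFinset v, x u = -x v := by
      intro u hu
      rw [SimpleGraph.mem_neighborFinset] at hu
      have := hsum v u hu
      linarith
    rw [Finset.sum_congr rfl hxw, Finset.sum_const, SimpleGraph.card_neighborFinset_eq_degree]
      at hAv
    simp only [nsmul_eq_mul] at hAv
    have hne : (G.degree v : ℝ) ≠ 0 := Nat.cast_ne_zero.2 hdeg.ne'
    have hxv : -x v = 0 := by
      rcases mul_eq_zero.1 hAv with h1 | h1
      · exact absurd h1 hne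
      · exact h1
    simp only [Pi.zero_apply]
    linarith
  -- rank computation
  have hrange : LinearMap.range B.mulVecLin = K := by
    rw [Matrix.range_mulVecLin]
    exact hBspan
  have hcomp : (M.transpose * B).mulVecLin = f ∘ₗ B.mulVecLin := Matrix.mulVecLin_mul _ _
  have hrng : LinearMap.range (M.transpose * B).mulVecLin = K.map f := by
    rw [hcomp, LinearMap.range_comp, hrange]
  rw [Matrix.rank, hrng]
  -- use domRestrict
  have hker : LinearMap.ker (f.domRestrict K) = ⊥ := by
    rw [LinearMap.ker_eq_bot']
    rintro ⟨x, hx⟩ hfx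
    have : f x = 0 := hfx
    exact Subtype.ext (key x hx this)
  have hrnk := LinearMap.finrank_range_add_finrank_ker (f.domRestrict K)
  rw [hker, finrank_bot, add_zero, LinearMap.range_domRestrict] at hrnk
  rw [hrnk, hK, ← hd]
end
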